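/- Let n and k be natural numbers with 2k ≤ n. Let J be the n×n complex matrix with J (2i) (2i+1) = 1 and J (2i+1) (2i) = −1 for i < k and all other entries 0 (k copies of !![0,1;−1,0] on the diagonal of the top-left 2k×2k corner). Set V = fromBlocks (1 + J*J) J (−J) (1 + J*J), and let σ_k = fromBlocks D 0 0 D, where D is the n×n diagonal matrix with diagonal entries −1 in the first k positions and 1 in the remaining n−k positions. Then V ∈ Sp(2n,ℂ), V * V = 1, and there exists g ∈ Sp(2n,ℂ) with g * V * g⁻¹ = σ_k. -/
import Mathlib

set_option maxHeartbeats 1000000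

open Matrix

/-- The standard symplectic form matrix `J₂ₙ = fromBlocks 0 Iₙ (−Iₙ) 0`. -/
def Jsymp (n : ℕ) : Matrix (Fin n ⊕ Fin n) (Fin n ⊕ Fin n) ℂ :=
  fromBlocks 0 1 (-1) 0

/-- Membership in the symplectic group `Sp(2n,ℂ)`: `M * J₂ₙ * Mᵀ = J₂ₙ`. -/
def IsSymplectic (n : ℕ) (M : Matrix (Fin n ⊕ Fin n) (Fin n ⊕ Fin n) ℂ) : Prop :=
  M * Jsymp n * Mᵀ = Jsymp n

/-- The `n × n` matrix with `k` copies of `!![0,1;−1,0]` on the diagonal of the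
top-left `2k × 2k` corner and zeros elsewhere. -/
def Jblock (n k : ℕ) : Matrix (Fin n) (Fin n) ℂ :=
  Matrix.of fun i j =>
    if (j : ℕ) = (i : ℕ) + 1 ∧ Even (i : ℕ) ∧ (j : ℕ) < 2 * k then 1
    else if (i : ℕ) = (j : ℕ) + 1 ∧ Even (j : ℕ) ∧ (i : ℕ) < 2 * k then -1
    else 0

/-- The diagonal matrix `D = diag(−I_k, I_{n−k})`. -/
def Dmat (n k : ℕ) : Matrix (Fin n) (Fin n) ℂ :=
  Matrix.diagonal fun i => if (i : ℕ) < k then -1 else 1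

namespace MonInvAux

variable (n k : ℕ)

lemma Jblock_apply (i j : Fin n) : Jblock n k i j =
    if (j : ℕ) = (i : ℕ) + 1 ∧ (i : ℕ) % 2 = 0 ∧ (j : ℕ) < 2 * k then 1
    else if (i : ℕ) = (j : ℕ) + 1 ∧ (j : ℕ) % 2 = 0 ∧ (i : ℕ) < 2 * k then -1
    else 0 := by
  simp only [Jblock, Matrix.of_apply, Nat.even_iff]

noncomputable def nf : Fin n → ℂ := fun i => if (i:ℕ) % 2 = 0 then -1 else 1
noncomputable def af : Fin n → ℂ := fun i => if (i:ℕ) < 2*k then 0 else 1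
noncomputable def sf : Fin n → ℂ := fun i => if (i:ℕ) < 2*k then (2⁻¹:ℂ) else 1
noncomputable def d'f : Fin n → ℂ := fun i => if (i:ℕ) % 2 = 0 ∧ (i:ℕ) < 2*k then -1 else 1
noncomputable def X : Matrix (Fin n) (Fin n) ℂ := Jblock n k * diagonal (nf n)

lemma X_apply (i j : Fin n) : X n k i j = Jblock n k i j * nf n j :=
  Matrix.mul_diagonal _ _ _ _

lemma JJ (hk : 2*k ≤ n) : Jblock n k * Jblock n k
    = diagonal (fun i : Fin n => if (i:ℕ) < 2*k then (-1:ℂ) else 0) := by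
  ext i j
  rw [Matrix.mul_apply, Matrix.diagonal_apply]
  by_cases hi : (i:ℕ) < 2*k
  · by_cases hp : (i:ℕ) % 2 = 0
    · have hin : (i:ℕ)+1 < n := by omega
      rw [Fintype.sum_eq_single (⟨(i:ℕ)+1, hin⟩ : Fin n)]
      · simp only [Jblock_apply, Fin.ext_iff, Fin.val_mk, true_and, and_true]
        split_ifs <;> first | (exfalso; omega) | norm_num
      · intro b hb
        have hb' : (b:ℕ) ≠ (i:ℕ)+1 := by simpa [Fin.ext_iff] using hb
        simp only [Jblock_apply]
        split_ifs <;> first | (exfalso; omega) | norm_num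
    · have hin : (i:ℕ)-1 < n := by omega
      rw [Fintype.sum_eq_single (⟨(i:ℕ)-1, hin⟩ : Fin n)]
      · simp only [Jblock_apply, Fin.ext_iff, Fin.val_mk, true_and, and_true]
        split_ifs <;> first | (exfalso; omega) | norm_num
      · intro b hb
        have hb' : (b:ℕ) ≠ (i:ℕ)-1 := by simpa [Fin.ext_iff] using hb
        simp only [Jblock_apply]
        split_ifs <;> first | (exfalso; omega) | norm_num
  · rw [Finset.sum_eq_zero]
    · split_ifs <;> first | (exfalso; omega) | rfl
    · intro b _
      simp only [Jblock_apply]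
      split_ifs <;> first | (exfalso; omega) | norm_num

lemma XX (hk : 2*k ≤ n) : X n k * X n k
    = diagonal (fun i : Fin n => if (i:ℕ) < 2*k then (1:ℂ) else 0) := by
  ext i j
  rw [Matrix.mul_apply, Matrix.diagonal_apply]
  simp only [X_apply]
  by_cases hi : (i:ℕ) < 2*k
  · by_cases hp : (i:ℕ) % 2 = 0
    · have hin : (i:ℕ)+1 < n := by omega
      rw [Fintype.sum_eq_single (⟨(i:ℕ)+1, hin⟩ : Fin n)]
      · simp only [Jblock_apply, nf, Fin.ext_iff, Fin.val_mk, true_and, and_true]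
        split_ifs <;> first | (exfalso; omega) | norm_num
      · intro b hb
        have hb' : (b:ℕ) ≠ (i:ℕ)+1 := by simpa [Fin.ext_iff] using hb
        simp only [Jblock_apply, nf]
        split_ifs <;> first | (exfalso; omega) | norm_num
    · have hin : (i:ℕ)-1 < n := by omega
      rw [Fintype.sum_eq_single (⟨(i:ℕ)-1, hin⟩ : Fin n)]
      · simp only [Jblock_apply, nf, Fin.ext_iff, Fin.val_mk, true_and, and_true]
        split_ifs <;> first | (exfalso; omega) | norm_num
      · intro b hb
        have hb' : (b:ℕ) ≠ (i:ℕ)-1 := by simpa [Fin.ext_iff] using hb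
        simp only [Jblock_apply, nf]
        split_ifs <;> first | (exfalso; omega) | norm_num
  · rw [Finset.sum_eq_zero]
    · split_ifs <;> first | (exfalso; omega) | rfl
    · intro b _
      simp only [Jblock_apply, nf]
      split_ifs <;> first | (exfalso; omega) | norm_num

lemma XT : (X n k)ᵀ = X n k := by
  ext i j
  rw [Matrix.transpose_apply, X_apply, X_apply]
  simp only [Jblock_apply, nf]
  split_ifs <;> first | (exfalso; omega) | norm_num

lemma JT : (Jblock n k)ᵀ = -(Jblock n k) := by
  ext i j
  rw [Matrix.transpose_apply, Matrix.neg_apply]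
  simp only [Jblock_apply]
  split_ifs <;> first | (exfalso; omega) | norm_num

lemma Aeq (hk : 2*k ≤ n) :
    (1 : Matrix (Fin n) (Fin n) ℂ) + Jblock n k * Jblock n k = diagonal (af n k) := by
  rw [JJ n k hk, ← Matrix.diagonal_one, Matrix.diagonal_add]
  exact congrArg _ (funext fun i => by simp only [af]; split_ifs <;> norm_num)

lemma JA0 : Jblock n k * diagonal (af n k) = 0 := by
  ext i j
  rw [Matrix.mul_diagonal, Matrix.zero_apply]
  simp only [Jblock_apply, af]
  split_ifs <;> first | (exfalso; omega) | norm_num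

lemma AJ0 : diagonal (af n k) * Jblock n k = 0 := by
  ext i j
  rw [Matrix.diagonal_mul, Matrix.zero_apply]
  simp only [Jblock_apply, af]
  split_ifs <;> first | (exfalso; omega) | norm_num

lemma AX0 : diagonal (af n k) * X n k = 0 := by
  rw [X, ← Matrix.mul_assoc, AJ0, Matrix.zero_mul]

lemma JS : Jblock n k * diagonal (sf n k) = (2⁻¹:ℂ) • Jblock n k := by
  ext i j
  rw [Matrix.mul_diagonal, Matrix.smul_apply]
  simp only [Jblock_apply, sf, smul_eq_mul]
  split_ifs <;> first | (exfalso; omega) | norm_num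

lemma SX : diagonal (sf n k) * X n k = (2⁻¹:ℂ) • X n k := by
  ext i j
  rw [Matrix.diagonal_mul, Matrix.smul_apply, X_apply]
  simp only [Jblock_apply, sf, nf, smul_eq_mul]
  split_ifs <;> first | (exfalso; omega) | norm_num

lemma XS : X n k * diagonal (sf n k) = (2⁻¹:ℂ) • X n k := by
  ext i j
  rw [Matrix.mul_diagonal, Matrix.smul_apply, X_apply]
  simp only [Jblock_apply, sf, nf, smul_eq_mul]
  split_ifs <;> first | (exfalso; omega) | norm_num

lemma XD' : X n k * diagonal (d'f n k) = Jblock n k := by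
  ext i j
  rw [Matrix.mul_diagonal, X_apply]
  simp only [Jblock_apply, d'f, nf]
  split_ifs <;> first | (exfalso; omega) | norm_num

lemma JX (hk : 2*k ≤ n) : Jblock n k * X n k
    = diagonal (fun i : Fin n => if (i:ℕ) < 2*k then -(nf n i) else 0) := by
  rw [X, ← Matrix.mul_assoc, JJ n k hk, Matrix.diagonal_mul_diagonal]
  exact congrArg _ (funext fun i => by simp only [nf]; split_ifs <;> norm_num)

/- permutation matrix -/

def ψ (k : ℕ) : ℕ → ℕ := fun i => if i < k then 2*i else if i < 2*k then 2*(i-k)+1 else i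

noncomputable def Pw : Matrix (Fin n) (Fin n) ℂ :=
  Matrix.of fun i j => if (j:ℕ) = ψ k (i:ℕ) then 1 else 0

lemma ψ_lt (hk : 2*k ≤ n) (i : Fin n) : ψ k (i:ℕ) < n := by
  have := i.isLt; unfold ψ; split_ifs <;> omega

lemma ψ_inj {a b : ℕ} (h : ψ k a = ψ k b) : a = b := by
  unfold ψ at h; split_ifs at h <;> omega

lemma PwPwT (hk : 2*k ≤ n) : Pw n k * (Pw n k)ᵀ = 1 := by
  ext i j
  rw [Matrix.mul_apply, Matrix.one_apply]
  rw [Fintype.sum_eq_single (⟨ψ k (i:ℕ), ψ_lt n k hk i⟩ : Fin n)]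
  · simp only [Pw, Matrix.of_apply, Matrix.transpose_apply, Fin.val_mk]
    rw [if_pos trivial, one_mul]
    by_cases hij : i = j
    · subst hij; rw [if_pos rfl, if_pos rfl]
    · rw [if_neg (fun h => hij (Fin.ext (ψ_inj k h))), if_neg hij]
  · intro b hb
    simp only [Pw, Matrix.of_apply, Matrix.transpose_apply]
    rw [if_neg (by simpa [Fin.ext_iff] using hb), zero_mul]

lemma PwD (hk : 2*k ≤ n) : Pw n k * diagonal (d'f n k) * (Pw n k)ᵀ = Dmat n k := by
  ext i j
  rw [Matrix.mul_apply]
  rw [Fintype.sum_eq_single (⟨ψ k (i:ℕ), ψ_lt n k hk i⟩ : Fin n)]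
  · rw [Matrix.mul_diagonal]
    simp only [Pw, Matrix.of_apply, Matrix.transpose_apply, Fin.val_mk]
    rw [if_pos trivial, one_mul]
    by_cases hij : i = j
    · subst hij
      rw [if_pos rfl, mul_one, Dmat, Matrix.diagonal_apply_eq]
      simp only [d'f, ψ, Fin.val_mk]
      split_ifs <;> first | (exfalso; omega) | norm_num
    · rw [if_neg (fun h => hij (Fin.ext (ψ_inj k h))), mul_zero, Dmat,
        Matrix.diagonal_apply_ne _ hij]
  · intro b hb
    rw [Matrix.mul_diagonal]
    simp only [Pw, Matrix.of_apply, Matrix.transpose_apply]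
    rw [if_neg (by simpa [Fin.ext_iff] using hb), zero_mul, zero_mul]

/- big matrices -/

noncomputable def V' : Matrix (Fin n ⊕ Fin n) (Fin n ⊕ Fin n) ℂ :=
  fromBlocks (diagonal (af n k)) (Jblock n k) (-(Jblock n k)) (diagonal (af n k))

noncomputable def hmat : Matrix (Fin n ⊕ Fin n) (Fin n ⊕ Fin n) ℂ :=
  fromBlocks 1 ((2⁻¹:ℂ) • X n k) (-(X n k)) (diagonal (sf n k))

noncomputable def hbk : Matrix (Fin n ⊕ Fin n) (Fin n ⊕ Fin n) ℂ :=
  fromBlocks (diagonal (sf n k)) (-((2⁻¹:ℂ) • X n k)) (X n k) 1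

noncomputable def W : Matrix (Fin n ⊕ Fin n) (Fin n ⊕ Fin n) ℂ :=
  fromBlocks (Pw n k) 0 0 (Pw n k)

noncomputable def Sig : Matrix (Fin n ⊕ Fin n) (Fin n ⊕ Fin n) ℂ :=
  fromBlocks (diagonal (d'f n k)) 0 0 (diagonal (d'f n k))

lemma half_XX_S (hk : 2*k ≤ n) :
    (2⁻¹:ℂ) • (X n k * X n k) + diagonal (sf n k) = 1 := by
  rw [XX n k hk, ← Matrix.diagonal_smul, Matrix.diagonal_add, ← Matrix.diagonal_one]
  refine congrArg _ (funext fun i => ?_)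
  simp only [Pi.smul_apply, smul_eq_mul, sf]
  split_ifs <;> norm_num

lemma A2mJ2 (hk : 2*k ≤ n) :
    diagonal (af n k) * diagonal (af n k) + -(Jblock n k * Jblock n k) = 1 := by
  rw [JJ n k hk, Matrix.diagonal_mul_diagonal, Matrix.diagonal_neg,
    Matrix.diagonal_add, ← Matrix.diagonal_one]
  refine congrArg _ (funext fun i => ?_)
  simp only [af]
  split_ifs <;> norm_num

lemma hbk_hmat (hk : 2*k ≤ n) : hbk n k * hmat n k = 1 := by
  rw [hbk, hmat, fromBlocks_multiply]
  have hTL : diagonal (sf n k) * 1 + -((2⁻¹:ℂ) • X n k) * -(X n k) = 1 := by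
    rw [mul_one, neg_mul_neg, Matrix.smul_mul, add_comm, half_XX_S n k hk]
  have hTR : diagonal (sf n k) * ((2⁻¹:ℂ) • X n k) + -((2⁻¹:ℂ) • X n k) * diagonal (sf n k) = 0 := by
    rw [Matrix.mul_smul, SX n k, neg_mul, Matrix.smul_mul, XS n k, add_neg_cancel]
  have hBL : X n k * 1 + 1 * -(X n k) = 0 := by
    rw [mul_one, one_mul, add_neg_cancel]
  have hBR : X n k * ((2⁻¹:ℂ) • X n k) + 1 * diagonal (sf n k) = 1 := by
    rw [Matrix.mul_smul, one_mul, half_XX_S n k hk]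
  rw [hTL, hTR, hBL, hBR, fromBlocks_one]

lemma hmat_hbk (hk : 2*k ≤ n) : hmat n k * hbk n k = 1 := by
  rw [hmat, hbk, fromBlocks_multiply]
  have hTL : 1 * diagonal (sf n k) + (2⁻¹:ℂ) • X n k * X n k = 1 := by
    rw [one_mul, Matrix.smul_mul, add_comm, half_XX_S n k hk]
  have hTR : 1 * -((2⁻¹:ℂ) • X n k) + (2⁻¹:ℂ) • X n k * 1 = 0 := by
    rw [one_mul, mul_one, neg_add_cancel]
  have hBL : -(X n k) * diagonal (sf n k) + diagonal (sf n k) * X n k = 0 := by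
    rw [neg_mul, XS n k, SX n k, neg_add_cancel]
  have hBR : -(X n k) * -((2⁻¹:ℂ) • X n k) + diagonal (sf n k) * 1 = 1 := by
    rw [neg_mul_neg, Matrix.mul_smul, mul_one, half_XX_S n k hk]
  rw [hTL, hTR, hBL, hBR, fromBlocks_one]

lemma WWT (hk : 2*k ≤ n) : W n k * (W n k)ᵀ = 1 := by
  rw [W, fromBlocks_transpose, fromBlocks_multiply]
  simp only [Matrix.mul_zero, Matrix.zero_mul, add_zero, zero_add, transpose_zero]
  rw [PwPwT n k hk, fromBlocks_one]

lemma Vh (hk : 2*k ≤ n) : V' n k * hmat n k = hmat n k * Sig n k := by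
  rw [V', hmat, Sig, fromBlocks_multiply, fromBlocks_multiply]
  rw [Matrix.fromBlocks_inj]
  refine ⟨?_, ?_, ?_, ?_⟩
  · -- diag af * 1 + J * -(X) = 1 * diag d'f + (½•X) * 0
    rw [mul_one, Matrix.mul_zero, one_mul, add_zero, mul_neg, JX n k hk,
      Matrix.diagonal_neg, Matrix.diagonal_add]
    refine congrArg _ (funext fun i => ?_)
    simp only [af, nf, d'f]
    split_ifs <;> first | (exfalso; omega) | norm_num
  · -- diag af * (½•X) + J * diag sf = 1 * 0 + (½•X) * diag d'f
    rw [Matrix.mul_smul, AX0 n k, smul_zero, zero_add, JS n k, one_mul, zero_add,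
      Matrix.smul_mul, XD' n k]
  · -- -(J) * 1 + diag af * -(X) = -(X) * diag d'f + diag sf * 0
    rw [mul_one, mul_neg, AX0 n k, neg_zero, add_zero, Matrix.mul_zero, add_zero,
      neg_mul, XD' n k]
  · -- -(J) * (½•X) + diag af * diag sf = -(X) * 0 + diag sf * diag d'f
    rw [Matrix.mul_zero, zero_add, neg_mul, Matrix.mul_smul, JX n k hk,
      ← Matrix.diagonal_smul, Matrix.diagonal_neg, Matrix.diagonal_mul_diagonal,
      Matrix.diagonal_mul_diagonal, Matrix.diagonal_add]
    refine congrArg _ (funext fun i => ?_)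
    simp only [Pi.smul_apply, smul_eq_mul, af, sf, nf, d'f]
    split_ifs <;> first | (exfalso; omega) | norm_num

lemma WSW (hk : 2*k ≤ n) :
    W n k * Sig n k * (W n k)ᵀ = fromBlocks (Dmat n k) 0 0 (Dmat n k) := by
  rw [W, Sig, fromBlocks_transpose, fromBlocks_multiply, fromBlocks_multiply]
  simp only [Matrix.mul_zero, Matrix.zero_mul, add_zero, zero_add, transpose_zero]
  rw [PwD n k hk]
lemma sympl_mul {M N : Matrix (Fin n ⊕ Fin n) (Fin n ⊕ Fin n) ℂ}
    (hM : IsSymplectic n M) (hN : IsSymplectic n N) : IsSymplectic n (M*N) := by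
  unfold IsSymplectic at *
  rw [transpose_mul]
  have e : M * N * Jsymp n * (Nᵀ * Mᵀ) = M * (N * Jsymp n * Nᵀ) * Mᵀ := by
    simp only [Matrix.mul_assoc]
  rw [e, hN, hM]
lemma V'T : (V' n k)ᵀ = V' n k := by
  rw [V', fromBlocks_transpose, JT, transpose_neg, JT, neg_neg, Matrix.diagonal_transpose]

lemma V'V' (hk : 2*k ≤ n) : V' n k * V' n k = 1 := by
  rw [V', fromBlocks_multiply]
  simp only [mul_neg, neg_mul, neg_neg, JA0, AJ0, neg_zero, add_zero, zero_add]
  rw [A2mJ2 n k hk, add_comm (-(Jblock n k * Jblock n k)), A2mJ2 n k hk, fromBlocks_one]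

lemma V'_sympl (hk : 2*k ≤ n) : IsSymplectic n (V' n k) := by
  unfold IsSymplectic
  rw [V'T, Jsymp, V', fromBlocks_multiply, fromBlocks_multiply]
  simp only [mul_zero, zero_mul, mul_one, one_mul, mul_neg, neg_mul, mul_neg_one,
    neg_one_mul, add_zero, zero_add, neg_neg, JA0, AJ0, neg_zero]
  rw [add_comm (-(Jblock n k * Jblock n k)), A2mJ2 n k hk]
  have e : -(diagonal (af n k) * diagonal (af n k)) + Jblock n k * Jblock n k
      = -(diagonal (af n k) * diagonal (af n k) + -(Jblock n k * Jblock n k)) := by abel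
  rw [e, A2mJ2 n k hk]

lemma hbkT : (hbk n k)ᵀ = fromBlocks (diagonal (sf n k)) (X n k) (-((2⁻¹:ℂ) • X n k)) 1 := by
  rw [hbk, fromBlocks_transpose, Matrix.diagonal_transpose, transpose_neg, transpose_smul,
    XT, transpose_one]

lemma hbk_sympl (hk : 2*k ≤ n) : IsSymplectic n (hbk n k) := by
  unfold IsSymplectic
  rw [hbkT, Jsymp, hbk, fromBlocks_multiply, fromBlocks_multiply]
  simp only [mul_zero, zero_mul, mul_one, one_mul, mul_neg, neg_mul, mul_neg_one,
    neg_one_mul, add_zero, zero_add, neg_neg, Matrix.smul_mul, Matrix.mul_smul,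
    XS, SX, smul_neg, neg_smul, smul_smul]
  have e : -(diagonal (sf n k)) + -((2⁻¹:ℂ) • (X n k * X n k))
      = -((2⁻¹:ℂ) • (X n k * X n k) + diagonal (sf n k)) := by abel
  rw [e, half_XX_S n k hk, add_neg_cancel, neg_add_cancel]

lemma W_sympl (hk : 2*k ≤ n) : IsSymplectic n (W n k) := by
  unfold IsSymplectic
  rw [Jsymp, W, fromBlocks_transpose, transpose_zero, fromBlocks_multiply, fromBlocks_multiply]
  simp only [mul_zero, zero_mul, mul_one, one_mul, mul_neg, neg_mul, mul_neg_one,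
    neg_one_mul, add_zero, zero_add, neg_neg]
  rw [neg_zero, PwPwT n k hk]

end MonInvAux

/-- Proof of Theorem "semisimple", type `Cₙ`: the monomial involution
`V = v̇_k = fromBlocks (1 + J²) J (−J) (1 + J²)` lies in `Sp(2n,ℂ)` and is
conjugate within `Sp(2n,ℂ)` to the semisimple element
`σ_k = diag(−I_k, I_{n−k}, −I_k, I_{n−k})`. -/
theorem monomial_involution_conjugate_sigma (n k : ℕ) (hk : 2 * k ≤ n) :
    IsSymplectic n
      (fromBlocks (1 + Jblock n k * Jblock n k) (Jblock n k) (-(Jblock n k))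
        (1 + Jblock n k * Jblock n k)) ∧
    (fromBlocks (1 + Jblock n k * Jblock n k) (Jblock n k) (-(Jblock n k))
        (1 + Jblock n k * Jblock n k)) *
      (fromBlocks (1 + Jblock n k * Jblock n k) (Jblock n k) (-(Jblock n k))
        (1 + Jblock n k * Jblock n k)) = 1 ∧
    ∃ g : Matrix (Fin n ⊕ Fin n) (Fin n ⊕ Fin n) ℂ, IsSymplectic n g ∧
      g * (fromBlocks (1 + Jblock n k * Jblock n k) (Jblock n k) (-(Jblock n k))
        (1 + Jblock n k * Jblock n k)) * g⁻¹ =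
        fromBlocks (Dmat n k) 0 0 (Dmat n k) := by
  rw [MonInvAux.Aeq n k hk]
  refine ⟨MonInvAux.V'_sympl n k hk, MonInvAux.V'V' n k hk, ?_⟩
  refine ⟨MonInvAux.W n k * MonInvAux.hbk n k,
    MonInvAux.sympl_mul n (MonInvAux.W_sympl n k hk) (MonInvAux.hbk_sympl n k hk), ?_⟩
  have hg : (MonInvAux.W n k * MonInvAux.hbk n k)⁻¹
      = MonInvAux.hmat n k * (MonInvAux.W n k)ᵀ := by
    apply Matrix.inv_eq_right_inv
    have e : MonInvAux.W n k * MonInvAux.hbk n k * (MonInvAux.hmat n k * (MonInvAux.W n k)ᵀ)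
        = MonInvAux.W n k * (MonInvAux.hbk n k * MonInvAux.hmat n k) * (MonInvAux.W n k)ᵀ := by
      simp only [Matrix.mul_assoc]
    rw [e, MonInvAux.hbk_hmat n k hk, mul_one, MonInvAux.WWT n k hk]
  rw [hg]
  have e2 : MonInvAux.W n k * MonInvAux.hbk n k * MonInvAux.V' n k
        * (MonInvAux.hmat n k * (MonInvAux.W n k)ᵀ)
      = MonInvAux.W n k * MonInvAux.hbk n k * (MonInvAux.V' n k * MonInvAux.hmat n k)
        * (MonInvAux.W n k)ᵀ := by
    simp only [Matrix.mul_assoc]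
  rw [show fromBlocks (diagonal (MonInvAux.af n k)) (Jblock n k) (-(Jblock n k))
      (diagonal (MonInvAux.af n k)) = MonInvAux.V' n k from rfl]
  rw [e2, MonInvAux.Vh n k hk]
  have e3 : MonInvAux.W n k * MonInvAux.hbk n k * (MonInvAux.hmat n k * MonInvAux.Sig n k)
        * (MonInvAux.W n k)ᵀ
      = MonInvAux.W n k * (MonInvAux.hbk n k * MonInvAux.hmat n k)
        * (MonInvAux.Sig n k * (MonInvAux.W n k)ᵀ) := by
    simp only [Matrix.mul_assoc]
  rw [e3, MonInvAux.hbk_hmat n k hk, mul_one, ← Matrix.mul_assoc, MonInvAux.WSW n k hk]
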